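/- On the Cartesian torus grid, let W_{ij} ∈ L¹(T^d) for i,j = 1,…,n and define the discrete kernels W^{ij}_{KJ} by cell averages. (i) If W_{ij}(x) = W_{ji}(−x) for a.e. x ∈ T^d, then W^{ij}_{KJ} = W^{ji}_{JK} for all cells K, J ∈ G. (ii) If ∑_{i,j=1}^n ∫_{T^d}∫_{T^d} W_{ij}(x−y)·v_i(x)·v_j(y) dx dy ≥ 0 for all v_1,…,v_n ∈ L²(T^d), then for all families v_i : G → ℝ (i = 1,…,n): ∑_{i,j=1}^n ∑_{K,J∈G} m(K)·m(J)·W^{ij}_{KJ}·v_i(K)·v_j(J) ≥ 0. -/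

import Mathlib

open MeasureTheory Real Finset

namespace SG

instance : Fact ((0:ℝ) < 1) := ⟨one_pos⟩

variable {d : ℕ}

/-- Cells of the Cartesian torus grid. -/
abbrev Cell (M : Fin d → ℕ) := ∀ ℓ : Fin d, ZMod (M ℓ)

/-- Cell measure `m(K) = Δx₁⋯Δx_d`. -/
noncomputable def mK (M : Fin d → ℕ) : ℝ := ∏ ℓ, ((M ℓ : ℝ))⁻¹

/-- Transmissibility coefficient of an edge in direction `ℓ`:
`τ_σ = m(σ)/d_σ = m(K)·M_ℓ²`. -/
noncomputable def τ (M : Fin d → ℕ) (ℓ : Fin d) : ℝ := mK M * (M ℓ : ℝ) ^ 2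

/-- Shift a cell by `s` in direction `ℓ` (mod `M ℓ`). -/
def shift (M : Fin d → ℕ) (K : Cell M) (ℓ : Fin d) (s : ℤ) : Cell M :=
  Function.update K ℓ (K ℓ + (s : ZMod (M ℓ)))

/-- Hypothesis (H2): `B` is continuous on `[0,∞)` with `0 < B(s) ≤ 1` for `s ≥ 0`. -/
def H2 (B : ℝ → ℝ) : Prop :=
  ContinuousOn B (Set.Ici 0) ∧ ∀ s : ℝ, 0 ≤ s → 0 < B s ∧ B s ≤ 1

/-- Hypothesis (H3): `α ∈ [0,1)` and `B(s) ≥ 1 − α·s` for all `s ≥ 0`. -/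
def H3 (B : ℝ → ℝ) (α : ℝ) : Prop :=
  0 ≤ α ∧ α < 1 ∧ ∀ s : ℝ, 0 ≤ s → 1 - α * s ≤ B s

/-- The scaled weight function `B_κ(s) = κ·B(s/κ)`. -/
noncomputable def Bk (κ : ℝ) (B : ℝ → ℝ) (s : ℝ) : ℝ := κ * B (s / κ)

/-- Upwind value on the (oriented) edge from `K` to `L`. -/
noncomputable def upw {M : Fin d → ℕ} (u p : Cell M → ℝ) (K L : Cell M) : ℝ :=
  if 0 ≤ p L - p K then u L else u K

/-- Numerical flux `F_{K,σ}[u,p]` from `K` through the edge (in direction `ℓ`) to its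
neighbor `L`. -/
noncomputable def flux (M : Fin d → ℕ) (κ : ℝ) (B : ℝ → ℝ) (u p : Cell M → ℝ)
    (ℓ : Fin d) (K L : Cell M) : ℝ :=
  -(τ M ℓ) * (Bk κ B |p L - p K| * (u L - u K) + upw u p K L * (p L - p K))

/-- Sum of the numerical fluxes over the `2d` edges incident to `K`. -/
noncomputable def fluxSum (M : Fin d → ℕ) (κ : ℝ) (B : ℝ → ℝ) (u p : Cell M → ℝ)
    (K : Cell M) : ℝ :=
  ∑ ℓ : Fin d, (flux M κ B u p ℓ K (shift M K ℓ 1) + flux M κ B u p ℓ K (shift M K ℓ (-1)))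

/-- One implicit Euler finite-volume step with prescribed potential `p`. -/
def Step (M : Fin d → ℕ) (κ Δt : ℝ) (B : ℝ → ℝ) (uPrev u p : Cell M → ℝ) : Prop :=
  ∀ K : Cell M, mK M * (u K - uPrev K) / Δt + fluxSum M κ B u p K = 0

/-- Discrete Boltzmann entropy. -/
noncomputable def HB (M : Fin d → ℕ) [∀ ℓ, NeZero (M ℓ)] {n : ℕ}
    (u : Fin n → Cell M → ℝ) : ℝ :=
  ∑ i, ∑ K : Cell M, mK M * (u i K * (Real.log (u i K) - 1))

/-- Discrete Rao entropy associated to discrete kernels `Wd`. -/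
noncomputable def HR (M : Fin d → ℕ) [∀ ℓ, NeZero (M ℓ)] {n : ℕ}
    (Wd : Fin n → Fin n → Cell M → Cell M → ℝ) (u : Fin n → Cell M → ℝ) : ℝ :=
  (1/2) * ∑ i, ∑ j, ∑ K : Cell M, ∑ J : Cell M,
    mK M * mK M * Wd i j K J * u i K * u j J

/-- Boltzmann entropy production term `P_B`. -/
noncomputable def PB (M : Fin d → ℕ) [∀ ℓ, NeZero (M ℓ)] {n : ℕ} (κ : ℝ) (B : ℝ → ℝ)
    (u p : Fin n → Cell M → ℝ) : ℝ :=
  4 * ∑ i, ∑ K : Cell M, ∑ ℓ : Fin d,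
    τ M ℓ * Bk κ B |p i (shift M K ℓ 1) - p i K| *
      (Real.sqrt (u i (shift M K ℓ 1)) - Real.sqrt (u i K)) ^ 2

/-- Rao entropy production term `P_R`. -/
noncomputable def PR (M : Fin d → ℕ) [∀ ℓ, NeZero (M ℓ)] {n : ℕ}
    (u p : Fin n → Cell M → ℝ) : ℝ :=
  ∑ i, ∑ K : Cell M, ∑ ℓ : Fin d,
    τ M ℓ * upw (u i) (p i) K (shift M K ℓ 1) * (p i (shift M K ℓ 1) - p i K) ^ 2

/-- Cross term `X(u,p)`. -/
noncomputable def Xc (M : Fin d → ℕ) [∀ ℓ, NeZero (M ℓ)] {n : ℕ}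
    (u p : Fin n → Cell M → ℝ) : ℝ :=
  ∑ i, ∑ K : Cell M, ∑ ℓ : Fin d,
    τ M ℓ * (p i (shift M K ℓ 1) - p i K) * (u i (shift M K ℓ 1) - u i K)

/-- Discrete Fisher information `∑_i ∑_σ τ_σ |D_σ √u_i|²`. -/
noncomputable def Fisher (M : Fin d → ℕ) [∀ ℓ, NeZero (M ℓ)] {n : ℕ}
    (u : Fin n → Cell M → ℝ) : ℝ :=
  ∑ i, ∑ K : Cell M, ∑ ℓ : Fin d,
    τ M ℓ * (Real.sqrt (u i (shift M K ℓ 1)) - Real.sqrt (u i K)) ^ 2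

/-- The torus `T^d = (ℝ/ℤ)^d`. -/
abbrev Td (d : ℕ) := Fin d → AddCircle (1 : ℝ)

/-- The box `Q_K ⊆ T^d` corresponding to the cell `K`. -/
noncomputable def QK (M : Fin d → ℕ) (K : Cell M) : Set (Td d) :=
  Set.univ.pi fun ℓ => (fun t : ℝ => (t : AddCircle (1 : ℝ))) ''
    Set.Ico (((K ℓ).val : ℝ) / (M ℓ)) ((((K ℓ).val : ℝ) + 1) / (M ℓ))

/-- The discrete kernel `W_{KJ} = (m(K)m(J))⁻¹ ∫_{Q_K}∫_{Q_J} W(x−y) dy dx`. -/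
noncomputable def Wdisc (M : Fin d → ℕ) (W : Td d → ℝ) (K J : Cell M) : ℝ :=
  (mK M * mK M)⁻¹ * ∫ x in QK M K, ∫ y in QK M J, W (x - y)

/-- The discrete nonlocal potential `p_i(K) = ∑_j ∑_J m(J)·Wd^{ij}_{KJ}·u_j(J)`. -/
noncomputable def pot (M : Fin d → ℕ) [∀ ℓ, NeZero (M ℓ)] {n : ℕ}
    (Wd : Fin n → Fin n → Cell M → Cell M → ℝ) (u : Fin n → Cell M → ℝ)
    (i : Fin n) (K : Cell M) : ℝ :=
  ∑ j, ∑ J : Cell M, mK M * Wd i j K J * u j J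

/-- Discrete `L^q` norm of a cell function. -/
noncomputable def normq (M : Fin d → ℕ) [∀ ℓ, NeZero (M ℓ)] (q : ℝ)
    (u : Cell M → ℝ) : ℝ :=
  (∑ K : Cell M, mK M * |u K| ^ q) ^ (1/q)

/-- Discrete `L^q` norm of an edge function (dual-cell measure `m(Δ_σ) = m(σ)·d_σ = m(K)`). -/
noncomputable def enorm (M : Fin d → ℕ) [∀ ℓ, NeZero (M ℓ)] (q : ℝ)
    (w : Cell M → Fin d → ℝ) : ℝ :=
  (∑ K : Cell M, ∑ ℓ : Fin d, mK M * |w K ℓ| ^ q) ^ (1/q)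

/-- Magnitude of the discrete gradient on the edge `(K,ℓ)`:
`|∇^h_σ v| = d·D_σ v/d_σ`. -/
noncomputable def gradh (M : Fin d → ℕ) (v : Cell M → ℝ) (K : Cell M) (ℓ : Fin d) : ℝ :=
  d * (M ℓ : ℝ) * |v (shift M K ℓ 1) - v K|


end SG

/-! (i) For each fixed `y`, the translation `x ↦ x - y` preserves Haar measure, so the a.e.
identity `W_ij(z) = W_ji(-z)` gives `W_ij(x - y) = W_ji(y - x)` for a.e. `x`; Fubini then swaps the
two cell integrals.
(ii) Testing the continuous form against the step functions `∑_K v_i(K) 1_{Q_K} ∈ L²(T^d)` and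
expanding bilinearly over pairs of cells produces exactly the discrete form. -/

namespace MeasureTheory

section IteratedIntegral

variable {X Y : Type*} [MeasurableSpace X] [MeasurableSpace Y] {μ : Measure X} {ν : Measure Y}

theorem integral_integral_mul_indicator_mul_indicator {A : Set X} {B : Set Y}
    (hA : MeasurableSet A) (hB : MeasurableSet B) (F : X → Y → ℝ) (a b : ℝ) :
    ∫ x, ∫ y, F x y * A.indicator (fun _ => a) x * B.indicator (fun _ => b) y ∂ν ∂μ
      = a * b * ∫ x in A, ∫ y in B, F x y ∂ν ∂μ := by
  have inner : ∀ x, ∫ y, F x y * A.indicator (fun _ => a) x * B.indicator (fun _ => b) y ∂ν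
      = A.indicator (fun x => a * b * ∫ y in B, F x y ∂ν) x := by
    intro x
    by_cases hx : x ∈ A
    · simp only [Set.indicator_of_mem hx, ← integral_indicator hB, ← integral_const_mul]
      refine integral_congr_ae (ae_of_all _ fun y => ?_)
      by_cases hy : y ∈ B <;> simp [hy, mul_comm, mul_left_comm]
    · simp [hx]
  simp_rw [inner, integral_indicator hA, integral_const_mul]

theorem integrable_mul_indicator_mul_indicator {A : Set X} {B : Set Y}
    (hA : MeasurableSet A) (hB : MeasurableSet B) {F : X → Y → ℝ}
    (hF : Integrable (Function.uncurry F) (μ.prod ν)) (a b : ℝ) :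
    Integrable (Function.uncurry fun x y =>
      F x y * A.indicator (fun _ => a) x * B.indicator (fun _ => b) y) (μ.prod ν) := by
  have h : (Function.uncurry fun x y =>
      F x y * A.indicator (fun _ => a) x * B.indicator (fun _ => b) y)
      = (A ×ˢ B).indicator fun p => a * b * Function.uncurry F p := by
    ext ⟨x, y⟩
    by_cases hx : x ∈ A <;> by_cases hy : y ∈ B <;> simp [hx, hy, mul_comm, mul_left_comm]
  rw [h]
  exact (hF.const_mul _).indicator (hA.prod hB)

variable {E : Type*} [NormedAddCommGroup E] [NormedSpace ℝ E]

theorem integral_integral_finsetSum [SFinite μ] [SFinite ν] {ι : Type*} (s : Finset ι)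
    {F : ι → X → Y → E}
    (hF : ∀ i ∈ s, Integrable (Function.uncurry (F i)) (μ.prod ν)) :
    ∫ x, ∫ y, ∑ i ∈ s, F i x y ∂ν ∂μ = ∑ i ∈ s, ∫ x, ∫ y, F i x y ∂ν ∂μ := by
  have hsum : Integrable (Function.uncurry fun x y => ∑ i ∈ s, F i x y) (μ.prod ν) := by
    simpa only [Function.uncurry_def] using integrable_finsetSum s hF
  rw [integral_integral hsum]
  exact (integral_finsetSum s hF).trans
    (Finset.sum_congr rfl fun i hi => (integral_integral (hF i hi)).symm)

theorem integral_integral_mul_sum_indicator_mul_sum_indicator [SFinite μ] [SFinite ν]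
    {ι κ : Type*} [Fintype ι] [Fintype κ] {A : ι → Set X} {B : κ → Set Y}
    (hA : ∀ i, MeasurableSet (A i)) (hB : ∀ k, MeasurableSet (B k)) {F : X → Y → ℝ}
    (hF : Integrable (Function.uncurry F) (μ.prod ν)) (a : ι → ℝ) (b : κ → ℝ) :
    ∫ x, ∫ y, F x y * (∑ i, (A i).indicator (fun _ => a i) x)
        * (∑ k, (B k).indicator (fun _ => b k) y) ∂ν ∂μ
      = ∑ i, ∑ k, a i * b k * ∫ x in A i, ∫ y in B k, F x y ∂ν ∂μ := by
  have expand : ∀ x y, F x y * (∑ i, (A i).indicator (fun _ => a i) x)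
        * (∑ k, (B k).indicator (fun _ => b k) y)
      = ∑ p : ι × κ, F x y * (A p.1).indicator (fun _ => a p.1) x
          * (B p.2).indicator (fun _ => b p.2) y := by
    intro x y
    rw [mul_assoc, Finset.sum_mul_sum, Fintype.sum_prod_type, Finset.mul_sum]
    simp only [Finset.mul_sum, mul_assoc]
  simp_rw [expand]
  rw [integral_integral_finsetSum _ fun p _ =>
    integrable_mul_indicator_mul_indicator (hA p.1) (hB p.2) hF (a p.1) (b p.2)]
  simp only [integral_integral_mul_indicator_mul_indicator (hA _) (hB _), Fintype.sum_prod_type]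

end IteratedIntegral

section AddGroup

variable {G E : Type*} [MeasurableSpace G] [AddGroup G] [MeasurableAdd₂ G] [MeasurableNeg G]
  {μ : Measure G} [IsFiniteMeasure μ] [μ.IsAddRightInvariant]
  [NormedAddCommGroup E] [NormedSpace ℝ E] {W : G → E}

theorem Integrable.comp_sub_prod (hW : Integrable W μ) :
    Integrable (Function.uncurry fun x y => W (x - y)) (μ.prod μ) := by
  simpa [Function.uncurry_def] using
    (integrable_const (1 : ℝ)).convolution_integrand (ContinuousLinearMap.lsmul ℝ ℝ) hW

theorem setIntegral_setIntegral_comp_sub_swap {W' : G → E} (hW : Integrable W μ)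
    (hsymm : ∀ᵐ x ∂μ, W x = W' (-x)) (A B : Set G) :
    ∫ x in A, ∫ y in B, W (x - y) ∂μ ∂μ = ∫ y in B, ∫ x in A, W' (y - x) ∂μ ∂μ := by
  have hint : Integrable (Function.uncurry fun x y => W (x - y))
      ((μ.restrict A).prod (μ.restrict B)) :=
    hW.comp_sub_prod.mono_measure (by rw [Measure.prod_restrict]; exact Measure.restrict_le_self)
  rw [integral_integral_swap hint]
  refine integral_congr_ae (ae_of_all _ fun y => integral_congr_ae (ae_restrict_of_ae ?_))
  filter_upwards [(measurePreserving_sub_right μ y).quasiMeasurePreserving.ae hsymm] with x hx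
  rw [hx, neg_sub]

end AddGroup

end MeasureTheory

theorem AddCircle.measurableSet_coe_image {T : ℝ} [Fact (0 < T)] {s : Set ℝ} {c : ℝ}
    (hs : MeasurableSet s) (hsub : s ⊆ Set.Ico c (c + T)) :
    MeasurableSet (((↑) : ℝ → AddCircle T) '' s) :=
  hs.image_of_continuousOn_injOn (AddCircle.continuous_mk' T).continuousOn
    fun _ hx _ hy h => (AddCircle.coe_eq_coe_iff_of_mem_Ico (hsub hx) (hsub hy)).mp h

namespace SG

section Grid

variable {d : ℕ} (M : Fin d → ℕ) [∀ ℓ, NeZero (M ℓ)]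

theorem measurableSet_QK (K : Cell M) : MeasurableSet (QK M K) := by
  refine MeasurableSet.univ_pi fun ℓ =>
    AddCircle.measurableSet_coe_image (c := 0) measurableSet_Ico (Set.Ico_subset_Ico ?_ ?_)
  · positivity
  · have hval : ((K ℓ).val : ℝ) + 1 ≤ M ℓ := by exact_mod_cast (K ℓ).val_lt
    simpa using div_le_one_of_le₀ hval (Nat.cast_nonneg _)

theorem mK_pos : 0 < mK M :=
  Finset.prod_pos fun _ _ => inv_pos.mpr (Nat.cast_pos.mpr (NeZero.pos _))

theorem mK_mul_mK_mul_Wdisc (W : Td d → ℝ) (K J : Cell M) :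
    mK M * mK M * Wdisc M W K J = ∫ x in QK M K, ∫ y in QK M J, W (x - y) :=
  mul_inv_cancel_left₀ (mul_pos (mK_pos M) (mK_pos M)).ne' _

noncomputable def cellStep (v : Cell M → ℝ) (x : Td d) : ℝ :=
  ∑ K, (QK M K).indicator (fun _ => v K) x

theorem memLp_cellStep (v : Cell M → ℝ) (p : ENNReal) : MemLp (cellStep M v) p :=
  memLp_finsetSum _ fun K _ =>
    memLp_indicator_const p (measurableSet_QK M K) (v K) (Or.inr (measure_ne_top _ _))

theorem integral_integral_mul_cellStep_mul_cellStep {W : Td d → ℝ} (hW : Integrable W)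
    (u v : Cell M → ℝ) :
    ∫ x, ∫ y, W (x - y) * cellStep M u x * cellStep M v y
      = ∑ K, ∑ J, mK M * mK M * Wdisc M W K J * u K * v J := by
  simp only [cellStep, integral_integral_mul_sum_indicator_mul_sum_indicator (measurableSet_QK M)
    (measurableSet_QK M) hW.comp_sub_prod, mK_mul_mK_mul_Wdisc]
  exact Finset.sum_congr rfl fun K _ => Finset.sum_congr rfl fun J _ => by ring

end Grid

/-- symmetry and positive semidefiniteness of the kernels transfer to
the discrete kernels. -/
theorem discrete_kernel_symmetry_and_psd {d n : ℕ} (M : Fin d → ℕ)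
    [∀ ℓ, NeZero (M ℓ)]
    (W : Fin n → Fin n → Td d → ℝ)
    (hW : ∀ i j, MeasureTheory.Integrable (W i j)) :
    ((∀ i j, ∀ᵐ x : Td d, W i j x = W j i (-x)) →
      ∀ i j, ∀ K J : Cell M, Wdisc M (W i j) K J = Wdisc M (W j i) J K) ∧
    ((∀ v : Fin n → Td d → ℝ, (∀ i, MeasureTheory.MemLp (v i) 2) →
        0 ≤ ∑ i, ∑ j, ∫ x : Td d, ∫ y : Td d, W i j (x - y) * v i x * v j y) →
      ∀ v : Fin n → Cell M → ℝ,
        0 ≤ ∑ i, ∑ j, ∑ K : Cell M, ∑ J : Cell M,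
              mK M * mK M * Wdisc M (W i j) K J * v i K * v j J) := by
  refine ⟨fun hsymm i j K J => ?_, fun hpos v => ?_⟩
  · rw [Wdisc, Wdisc, setIntegral_setIntegral_comp_sub_swap (hW i j) (hsymm i j)]
  · simpa only [integral_integral_mul_cellStep_mul_cellStep M (hW _ _)] using
      hpos (fun i => cellStep M (v i)) fun i => memLp_cellStep M (v i) 2

end SG
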